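/- Let E_Z > 0 and let l be an integer with 2^l > E_Z. Then the binary entropy of p̃_l = 1/(1 + e^{2^l/E_Z}) satisfies H(p̃_l) ≤ 3·log₂(e)·E_Z·2^{-l} (equivalently, H(p̃_l) ≤ 3·log₂(e)·2^{-l+η} where η = log₂(E_Z)). -/

import Mathlib

/-- The binary entropy function (base 2): `H(p) = -p log₂ p - (1-p) log₂ (1-p)`. -/
noncomputable def binEnt (p : ℝ) : ℝ :=
  -(p * Real.logb 2 p) - (1 - p) * Real.logb 2 (1 - p)

/-!
With `x = 2^l / E_Z` and `p = 1/(1 + eˣ)`, the natural-log entropy of `p` equals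
`x/(1 + eˣ) + log(1 + e⁻ˣ) ≤ (x + 1) e⁻ˣ`, and `x (x + 1) ≤ 2 eˣ` for `x ≥ 0` turns this into
`2/x`. Dividing by `log 2` gives the bound.
-/

open Real

lemma binEnt_eq_binEntropy_div_log_two (p : ℝ) : binEnt p = binEntropy p / log 2 := by
  simp only [binEnt, binEntropy, logb, log_inv]
  ring

lemma one_sub_inv_one_add_exp (x : ℝ) : 1 - (1 + exp x)⁻¹ = (1 + exp (-x))⁻¹ := by
  rw [exp_neg]
  field_simp
  ring

lemma log_one_add_exp (x : ℝ) : log (1 + exp x) = x + log (1 + exp (-x)) := by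
  have h : 1 + exp x = exp x * (1 + exp (-x)) := by
    rw [mul_add, ← exp_add, add_neg_cancel, exp_zero, mul_one, add_comm]
  rw [h, log_mul (exp_pos x).ne' (by positivity), log_exp]

lemma binEntropy_inv_one_add_exp (x : ℝ) :
    binEntropy (1 + exp x)⁻¹ = x / (1 + exp x) + log (1 + exp (-x)) := by
  rw [binEntropy, one_sub_inv_one_add_exp, inv_inv, inv_inv, log_one_add_exp,
    ← one_sub_inv_one_add_exp]
  ring

lemma binEntropy_inv_one_add_exp_le {x : ℝ} (hx : 0 ≤ x) :
    binEntropy (1 + exp x)⁻¹ ≤ (x + 1) * exp (-x) := by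
  have hfirst : x / (1 + exp x) ≤ x * exp (-x) := by
    rw [exp_neg, ← div_eq_mul_inv]
    exact div_le_div_of_nonneg_left hx (exp_pos x) (by linarith)
  have hsecond : log (1 + exp (-x)) ≤ exp (-x) := by
    linarith [log_le_sub_one_of_pos (by positivity : 0 < 1 + exp (-x))]
  rw [binEntropy_inv_one_add_exp]
  linarith

lemma mul_add_one_le_two_mul_exp {x : ℝ} (hx : 0 ≤ x) : x * (x + 1) ≤ 2 * exp x := by
  nlinarith [quadratic_le_exp_of_nonneg hx]

lemma binEntropy_inv_one_add_exp_le_two_div {x : ℝ} (hx : 0 < x) :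
    binEntropy (1 + exp x)⁻¹ ≤ 2 / x := by
  refine (binEntropy_inv_one_add_exp_le hx.le).trans ?_
  rw [exp_neg, ← div_eq_mul_inv, div_le_div_iff₀ (exp_pos x) hx]
  linarith [mul_add_one_le_two_mul_exp hx.le]

theorem binEnt_noise_upper_bound (EZ : ℝ) (hEZ : 0 < EZ) (l : ℤ) :
    binEnt (1 / (1 + Real.exp (2 ^ l / EZ))) ≤
      3 * Real.logb 2 (Real.exp 1) * EZ * (2 : ℝ) ^ (-l) := by
  set x : ℝ := 2 ^ l / EZ with hx_def
  have hx : 0 < x := by positivity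
  calc binEnt (1 / (1 + exp x)) = binEntropy (1 + exp x)⁻¹ / log 2 := by
        rw [one_div, binEnt_eq_binEntropy_div_log_two]
    _ ≤ 3 / x / log 2 := by
        gcongr
        exact (binEntropy_inv_one_add_exp_le_two_div hx).trans (by gcongr; norm_num)
    _ = 3 * logb 2 (exp 1) * EZ * 2 ^ (-l) := by
        rw [logb, log_exp, zpow_neg, hx_def]
        field_simp
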